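/- (Lemma 2.1, eq. (2.1)) Let a, b, c be real numbers with a·c·(b²−4ac) ≠ 0, and let i, j ≥ 0 be integers such that n := i + j is odd and n ≥ 5. Then there exist real polynomials f̄₁, f̄₂, f̄₃, f̄₄, f̄₅ with deg f̄₁ ≤ ⌊(n−1)/4⌋, deg f̄₂ ≤ ⌊(n−3)/4⌋, deg f̄₃ ≤ ⌊(n−3)/4⌋, deg f̄₅ ≤ ⌊(n−3)/4⌋, and deg f̄₄ ≤ ⌊(n−1)/4⌋ − 1, such that for every h ∈ ℝ and every closed curve γ at level h of H: I_{i,j}(γ) = f̄₁(h)·I_{0,1}(γ) + f̄₂(h)·I_{0,3}(γ) + f̄₃(h)·I_{2,1}(γ) + f̄₄(h)·I_{2,3}(γ) + f̄₅(h)·I_{1,2}(γ). -/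

import Mathlib

/-- The Hamiltonian H(x,y) = x² − y² + a·x⁴ + c·y⁴ + b·x²·y². -/
noncomputable def Hfun (a b c x y : ℝ) : ℝ :=
  x ^ 2 - y ^ 2 + a * x ^ 4 + c * y ^ 4 + b * x ^ 2 * y ^ 2

/-- The line integral I_{i,j}(γ) = ∮_γ x^i y^j dx along a parametrized curve of period T. -/
noncomputable def lineInt (x y : ℝ → ℝ) (T : ℝ) (i j : ℕ) : ℝ :=
  ∫ t in (0:ℝ)..T, x t ^ i * y t ^ j * deriv x t

/-!
Besides `I_{i,j} = ∮ x^i y^j dx`, use `K_{i,j} = ∮ x^i y^j dy`. Along a closed curve in `{H = h}`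
the forms `d(x^p y^q)` integrate to zero, `x^i y^j (H - h) dx` vanishes identically, and so does
`x^p y^q dH`. Give `h` weight 4 and `I_{i,j}` weight `i + j`. Modulo terms of lower weight the
second relation reads `a I_{i+4,j} + b I_{i+2,j+2} + c I_{i,j+4} ≡ 0`, while the third, with its
`K`s turned into `I`s by the first and its `c`-term removed by the second, reads
`2a (j+2) I_{i+2,j} + b j I_{i,j+2} ≡ 0`. This pushes every top-weight `I_{i,j}` with `i ≥ 1` down
to `I_{1,n-1}` or `I_{2,n-2}`, and eliminating between the two relations shows that these are
`(b² - 4ac)`-multiples of lower terms, except `I_{2,3}` whose weight is too small; `I_{0,n}` then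
follows from the second relation since `c ≠ 0`. Induction on the odd weight `n` concludes.
-/

open intervalIntegral Polynomial

noncomputable def lineIntDy (x y : ℝ → ℝ) (T : ℝ) (i j : ℕ) : ℝ :=
  ∫ t in (0:ℝ)..T, x t ^ i * y t ^ j * deriv y t

section LineIntegrals

variable {a b c h : ℝ} {x y : ℝ → ℝ} {T : ℝ}

theorem lineInt_exact (hx : ContDiff ℝ 1 x) (hy : ContDiff ℝ 1 y) (hxT : x T = x 0)
    (hyT : y T = y 0) (p q : ℕ) :
    p * lineInt x y T (p - 1) q + q * lineIntDy x y T p (q - 1) = 0 := by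
  have := hx.continuous
  have := hy.continuous
  have := hx.continuous_deriv le_rfl
  have := hy.continuous_deriv le_rfl
  have hderiv : ∀ t ∈ Set.uIcc 0 T, HasDerivAt (fun s => x s ^ p * y s ^ q)
      (p * (x t ^ (p - 1) * y t ^ q * deriv x t)
        + q * (x t ^ p * y t ^ (q - 1) * deriv y t)) t := fun t _ => by
    refine (((hx.differentiable one_ne_zero t).hasDerivAt.fun_pow p).mul
      ((hy.differentiable one_ne_zero t).hasDerivAt.fun_pow q)).congr_deriv ?_
    ring
  calc _ = ∫ t in (0:ℝ)..T, (p * (x t ^ (p - 1) * y t ^ q * deriv x t)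
        + q * (x t ^ p * y t ^ (q - 1) * deriv y t)) := by
        simp (disch := exact Continuous.intervalIntegrable (by fun_prop) _ _) only
          [integral_add, integral_const_mul]
        rfl
    _ = 0 := by
      rw [integral_eq_sub_of_hasDerivAt hderiv (Continuous.intervalIntegrable (by fun_prop) _ _),
        hxT, hyT, sub_self]

theorem lineInt_zero_right (hx : ContDiff ℝ 1 x) (hy : ContDiff ℝ 1 y) (hxT : x T = x 0)
    (hyT : y T = y 0) (i : ℕ) : lineInt x y T i 0 = 0 := by
  simpa [Nat.cast_add_one_ne_zero] using lineInt_exact hx hy hxT hyT (i + 1) 0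

theorem lineInt_level (hx : Continuous x) (hy : Continuous y) (hx' : Continuous (deriv x))
    (hH : ∀ t, Hfun a b c (x t) (y t) = h) (i j : ℕ) :
    lineInt x y T (i + 2) j - lineInt x y T i (j + 2) + a * lineInt x y T (i + 4) j
      + c * lineInt x y T i (j + 4) + b * lineInt x y T (i + 2) (j + 2)
      = h * lineInt x y T i j := by
  have h0 : ∫ t in (0:ℝ)..T, (x t ^ (i + 2) * y t ^ j * deriv x t
      - x t ^ i * y t ^ (j + 2) * deriv x t + a * (x t ^ (i + 4) * y t ^ j * deriv x t)
      + c * (x t ^ i * y t ^ (j + 4) * deriv x t)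
      + b * (x t ^ (i + 2) * y t ^ (j + 2) * deriv x t)
      - h * (x t ^ i * y t ^ j * deriv x t)) = 0 := by
    rw [integral_congr (g := fun _ => 0) fun t _ => ?_, integral_zero]
    have := hH t
    unfold Hfun at this
    linear_combination (x t ^ i * y t ^ j * deriv x t) * this
  simp (disch := exact Continuous.intervalIntegrable (by fun_prop) _ _) only
    [integral_add, integral_sub, integral_const_mul] at h0
  unfold lineInt
  linear_combination h0

theorem Hfun_deriv_eq_zero (hx : Differentiable ℝ x) (hy : Differentiable ℝ y)
    (hH : ∀ t, Hfun a b c (x t) (y t) = h) (t : ℝ) :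
    (2 * x t + 4 * a * x t ^ 3 + 2 * b * x t * y t ^ 2) * deriv x t
      + (-2 * y t + 4 * c * y t ^ 3 + 2 * b * x t ^ 2 * y t) * deriv y t = 0 := by
  have hx' := (hx t).hasDerivAt
  have hy' := (hy t).hasDerivAt
  have hd : HasDerivAt (fun s => Hfun a b c (x s) (y s))
      ((2 * x t + 4 * a * x t ^ 3 + 2 * b * x t * y t ^ 2) * deriv x t
        + (-2 * y t + 4 * c * y t ^ 3 + 2 * b * x t ^ 2 * y t) * deriv y t) t := by
    unfold Hfun
    refine (((((hx'.fun_pow 2).sub (hy'.fun_pow 2)).add ((hx'.fun_pow 4).const_mul a)).add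
      ((hy'.fun_pow 4).const_mul c)).add
      (((hx'.fun_pow 2).const_mul b).mul (hy'.fun_pow 2))).congr_deriv ?_
    push_cast
    ring
  rw [show (fun s => Hfun a b c (x s) (y s)) = fun _ => h from funext hH] at hd
  exact hd.unique (hasDerivAt_const t h)

theorem lineInt_dHfun (hx : ContDiff ℝ 1 x) (hy : ContDiff ℝ 1 y)
    (hH : ∀ t, Hfun a b c (x t) (y t) = h) (p q : ℕ) :
    2 * lineInt x y T (p + 1) q + 4 * a * lineInt x y T (p + 3) q
      + 2 * b * lineInt x y T (p + 1) (q + 2) - 2 * lineIntDy x y T p (q + 1)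
      + 4 * c * lineIntDy x y T p (q + 3) + 2 * b * lineIntDy x y T (p + 2) (q + 1) = 0 := by
  have := hx.continuous
  have := hy.continuous
  have := hx.continuous_deriv le_rfl
  have := hy.continuous_deriv le_rfl
  have h0 : ∫ t in (0:ℝ)..T, (2 * (x t ^ (p + 1) * y t ^ q * deriv x t)
      + 4 * a * (x t ^ (p + 3) * y t ^ q * deriv x t)
      + 2 * b * (x t ^ (p + 1) * y t ^ (q + 2) * deriv x t)
      - 2 * (x t ^ p * y t ^ (q + 1) * deriv y t)
      + 4 * c * (x t ^ p * y t ^ (q + 3) * deriv y t)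
      + 2 * b * (x t ^ (p + 2) * y t ^ (q + 1) * deriv y t)) = 0 := by
    rw [integral_congr (g := fun _ => 0) fun t _ => ?_, integral_zero]
    linear_combination (x t ^ p * y t ^ q) *
      Hfun_deriv_eq_zero (hx.differentiable one_ne_zero) (hy.differentiable one_ne_zero) hH t
  simp (disch := exact Continuous.intervalIntegrable (by fun_prop) _ _) only
    [integral_add, integral_sub, integral_const_mul] at h0
  unfold lineInt lineIntDy
  linear_combination h0

theorem lineInt_step (hx : ContDiff ℝ 1 x) (hy : ContDiff ℝ 1 y)
    (hxT : x T = x 0) (hyT : y T = y 0) (hH : ∀ t, Hfun a b c (x t) (y t) = h) (p q : ℕ) :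
    (p + q + 4) *
        (2 * a * (q + 2) * lineInt x y T (p + 3) q + b * q * lineInt x y T (p + 1) (q + 2))
      = 2 * p * (q + 2) * h * lineInt x y T (p - 1) q + p * q * lineInt x y T (p - 1) (q + 2)
        - (q + 2) * (2 * p + q + 4) * lineInt x y T (p + 1) q := by
  have hB := lineInt_dHfun (T := T) hx hy hH p q
  have E1 := lineInt_exact hx hy hxT hyT p (q + 2)
  have E2 := lineInt_exact hx hy hxT hyT p (q + 4)
  have E3 := lineInt_exact hx hy hxT hyT (p + 2) (q + 2)
  simp only [Nat.add_succ_sub_one] at E1 E2 E3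
  push_cast at E1 E2 E3
  rcases p with _ | m
  · linear_combination (q + 2) * (q + 4) / 2 * hB + (q + 4) * E1 - 2 * c * (q + 2) * E2
      - b * (q + 4) * E3
  · have hC := lineInt_level (T := T) hx.continuous hy.continuous
      (hx.continuous_deriv le_rfl) hH m q
    simp only [Nat.add_sub_cancel] at E1 E2 ⊢
    push_cast at *
    linear_combination (q + 2) * (q + 4) / 2 * hB + (q + 4) * E1 - 2 * c * (q + 2) * E2
      - b * (q + 4) * E3 + 2 * (m + 1) * (q + 2) * hC

end LineIntegrals

structure ClosedCurve (a b c : ℝ) where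
  level : ℝ
  x : ℝ → ℝ
  y : ℝ → ℝ
  period : ℝ
  contDiff_x : ContDiff ℝ 1 x
  contDiff_y : ContDiff ℝ 1 y
  periodic : ∀ t, x (t + period) = x t ∧ y (t + period) = y t
  hfun_eq : ∀ t, Hfun a b c (x t) (y t) = level

namespace ClosedCurve

variable {a b c : ℝ}

noncomputable def I (i j : ℕ) (γ : ClosedCurve a b c) : ℝ := lineInt γ.x γ.y γ.period i j

theorem x_period (γ : ClosedCurve a b c) : γ.x γ.period = γ.x 0 := by
  simpa using (γ.periodic 0).1

theorem y_period (γ : ClosedCurve a b c) : γ.y γ.period = γ.y 0 := by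
  simpa using (γ.periodic 0).2

theorem I_zero_right (i : ℕ) : (I i 0 : ClosedCurve a b c → ℝ) = 0 :=
  funext fun γ => lineInt_zero_right γ.contDiff_x γ.contDiff_y γ.x_period γ.y_period i

theorem level_relation (i j : ℕ) :
    a • (I (i + 4) j : ClosedCurve a b c → ℝ) + b • I (i + 2) (j + 2) + c • I i (j + 4)
      = level * I i j - I (i + 2) j + I i (j + 2) := funext fun γ => by
  simp only [Pi.add_apply, Pi.sub_apply, Pi.mul_apply, Pi.smul_apply, smul_eq_mul, I]
  linear_combination lineInt_level γ.contDiff_x.continuous γ.contDiff_y.continuous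
    (γ.contDiff_x.continuous_deriv le_rfl) γ.hfun_eq i j

theorem step_relation (p q : ℕ) :
    (p + q + 4 : ℝ) • ((2 * a * (q + 2)) • (I (p + 3) q : ClosedCurve a b c → ℝ)
        + (b * q) • I (p + 1) (q + 2))
      = (p : ℝ) • ((2 * (q + 2) : ℝ) • (level * I (p - 1) q) + (q : ℝ) • I (p - 1) (q + 2))
        - ((q + 2) * (2 * p + q + 4) : ℝ) • I (p + 1) q := funext fun γ => by
  simp only [Pi.add_apply, Pi.sub_apply, Pi.mul_apply, Pi.smul_apply, smul_eq_mul, I]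
  linear_combination lineInt_step γ.contDiff_x γ.contDiff_y γ.x_period γ.y_period γ.hfun_eq p q

def basicExp : Fin 5 → ℕ × ℕ := ![(0, 1), (0, 3), (2, 1), (2, 3), (1, 2)]

/-- In `∑ fₖ(h) I_{iₖ,jₖ}` the coefficient of `h^d` in `fₖ` carries weight `4 d + iₖ + jₖ`. -/
def basicSpan (a b c : ℝ) (N : ℕ) : Submodule ℝ (ClosedCurve a b c → ℝ) where
  carrier := {F | ∃ f : Fin 5 → ℝ[X],
    (∀ k d, N < 4 * d + (basicExp k).1 + (basicExp k).2 → (f k).coeff d = 0) ∧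
    F = fun γ => ∑ k, (f k).eval γ.level * I (basicExp k).1 (basicExp k).2 γ}
  zero_mem' := ⟨0, by simp, by ext; simp⟩
  add_mem' := by
    rintro _ _ ⟨f, hf, rfl⟩ ⟨g, hg, rfl⟩
    refine ⟨f + g, fun k d hd => by simp [hf k d hd, hg k d hd], ?_⟩
    ext γ
    simp [add_mul, Finset.sum_add_distrib]
  smul_mem' := by
    rintro r _ ⟨f, hf, rfl⟩
    refine ⟨r • f, fun k d hd => by simp [hf k d hd], ?_⟩
    ext γ
    simp [Finset.mul_sum, mul_assoc]

theorem basicSpan_mono {N M : ℕ} (h : N ≤ M) : basicSpan a b c N ≤ basicSpan a b c M := by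
  rintro _ ⟨f, hf, rfl⟩
  exact ⟨f, fun k d hd => hf k d (by omega), rfl⟩

theorem level_mul_mem_basicSpan {N : ℕ} {F : ClosedCurve a b c → ℝ}
    (hF : F ∈ basicSpan a b c N) : level * F ∈ basicSpan a b c (N + 4) := by
  obtain ⟨f, hf, rfl⟩ := hF
  refine ⟨fun k => X * f k, fun k d hd => ?_, ?_⟩
  · rcases d with _ | d
    · exact coeff_X_mul_zero _
    · rw [coeff_X_mul]
      exact hf k d (by omega)
  · ext γ
    simp [Finset.mul_sum, mul_assoc]

theorem I_basicExp_mem_basicSpan (k : Fin 5) :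
    I (basicExp k).1 (basicExp k).2 ∈ basicSpan a b c ((basicExp k).1 + (basicExp k).2) := by
  refine ⟨Pi.single k 1, fun k' d hd => ?_, ?_⟩
  · rcases eq_or_ne k' k with rfl | hk
    · simp only [Pi.single_eq_same, coeff_one]
      rw [if_neg]; omega
    · simp [hk]
  · ext γ
    rw [Finset.sum_eq_single k (fun k' _ hk => by simp [hk]) (by simp)]
    simp

def ReducedBelow (a b c : ℝ) (n : ℕ) : Prop :=
  (∀ i j, i + j + 2 = n → I i j ∈ basicSpan a b c n) ∧
    ∀ i j, i + j + 4 = n → level * I i j ∈ basicSpan a b c n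

section Reduction

variable {n : ℕ}

theorem level_relation_mem (hlow : ReducedBelow a b c n) {i j : ℕ} (h : i + j + 4 = n) :
    a • I (i + 4) j + b • I (i + 2) (j + 2) + c • I i (j + 4) ∈ basicSpan a b c n := by
  rw [level_relation]
  exact add_mem (sub_mem (hlow.2 i j h) (hlow.1 _ _ (by omega))) (hlow.1 _ _ (by omega))

theorem step_relation_mem (hlow : ReducedBelow a b c n) {p q : ℕ} (h : p + q + 3 = n) :
    (2 * a * (q + 2)) • I (p + 3) q + (b * q) • I (p + 1) (q + 2) ∈ basicSpan a b c n := by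
  rw [← Submodule.smul_mem_iff _ (by positivity : (p + q + 4 : ℝ) ≠ 0), step_relation]
  refine sub_mem ?_ (Submodule.smul_mem _ _ (hlow.1 _ _ (by omega)))
  rcases p with _ | p
  · simp
  · simp only [Nat.add_sub_cancel]
    exact Submodule.smul_mem _ _ (add_mem (Submodule.smul_mem _ _ (hlow.2 _ _ (by omega)))
      (Submodule.smul_mem _ _ (hlow.1 _ _ (by omega))))

theorem I_mem_of_step (ha : a ≠ 0) (hlow : ReducedBelow a b c n) {p q : ℕ} (h : p + q + 3 = n)
    (hI : I (p + 1) (q + 2) ∈ basicSpan a b c n) : I (p + 3) q ∈ basicSpan a b c n := by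
  rw [← Submodule.smul_mem_iff _ (by positivity : 2 * a * (q + 2) ≠ 0)]
  simpa using sub_mem (step_relation_mem hlow h) (Submodule.smul_mem _ (b * q) hI)

theorem I_succ_mem_of_discr_ne_zero (hdisc : b ^ 2 - 4 * a * c ≠ 0)
    (hlow : ReducedBelow a b c n) {s j : ℕ} (h : s + j + 5 = n) :
    I (s + 1) (j + 4) ∈ basicSpan a b c n := by
  have E1 := (Submodule.Quotient.mk_eq_zero _).2
    (step_relation_mem hlow (p := s) (q := j + 2) (by omega))
  have E2 := (Submodule.Quotient.mk_eq_zero _).2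
    (step_relation_mem hlow (p := s + 2) (q := j) (by omega))
  have E3 := (Submodule.Quotient.mk_eq_zero _).2
    (level_relation_mem hlow (i := s + 1) (j := j) (by omega))
  simp only [Submodule.Quotient.mk_add, Submodule.Quotient.mk_smul, add_assoc, Nat.reduceAdd]
    at E1 E2 E3
  -- eliminating `I_{s+5,j}` and `I_{s+3,j+2}` leaves `(j + 2)(b² - 4ac) I_{s+1,j+4}`
  rw [← Submodule.smul_mem_iff _ (by positivity : ((j : ℝ) + 2) * (b ^ 2 - 4 * a * c) ≠ 0),
    ← Submodule.Quotient.mk_eq_zero, Submodule.Quotient.mk_smul]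
  linear_combination (norm := module) b • E1 + (2 * a) • E2 - (4 * a * (j + 2)) • E3

theorem I_mem_of_reducedBelow (ha : a ≠ 0) (hc : c ≠ 0) (hdisc : b ^ 2 - 4 * a * c ≠ 0)
    (hodd : Odd n) (hn : 5 ≤ n) (hlow : ReducedBelow a b c n) :
    ∀ i j, i + j = n → I i j ∈ basicSpan a b c n := by
  have hI1 : I 1 (n - 1) ∈ basicSpan a b c n := by
    obtain ⟨j, rfl⟩ : ∃ j, n = j + 5 := ⟨n - 5, by omega⟩
    exact I_succ_mem_of_discr_ne_zero hdisc hlow (s := 0) (j := j) (by omega)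
  have hI2 : I 2 (n - 2) ∈ basicSpan a b c n := by
    obtain h7 | h7 := Nat.lt_or_ge n 7
    · obtain rfl : n = 5 := by
        obtain ⟨k, rfl⟩ := hodd
        omega
      exact I_basicExp_mem_basicSpan 3
    · obtain ⟨j, rfl⟩ : ∃ j, n = j + 6 := ⟨n - 6, by omega⟩
      exact I_succ_mem_of_discr_ne_zero hdisc hlow (s := 1) (j := j) (by omega)
  have hpos : ∀ i j, i + j = n → 1 ≤ i → I i j ∈ basicSpan a b c n := by
    intro i
    induction i using Nat.strong_induction_on with
    | _ i IH =>
      intro j hij hi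
      obtain _ | _ | _ | p := i
      · omega
      · rwa [show j = n - 1 by omega]
      · rwa [show j = n - 2 by omega]
      · exact I_mem_of_step ha hlow (by omega) (IH (p + 1) (by omega) _ (by omega) (by omega))
  intro i j hij
  rcases i with _ | i
  · obtain ⟨m, rfl⟩ : ∃ m, j = m + 4 := ⟨j - 4, by omega⟩
    rw [← Submodule.smul_mem_iff _ hc]
    have h4 := Submodule.smul_mem _ a (hpos 4 m (by omega) (by omega))
    have h2 := Submodule.smul_mem _ b (hpos 2 (m + 2) (by omega) (by omega))
    convert sub_mem (sub_mem (level_relation_mem hlow (i := 0) (by omega)) h4) h2 using 1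
    abel
  · exact hpos _ _ hij (by omega)

end Reduction

theorem I_mem_basicSpan_of_odd (ha : a ≠ 0) (hc : c ≠ 0) (hdisc : b ^ 2 - 4 * a * c ≠ 0) :
    ∀ n, Odd n → ∀ i j, i + j = n → I i j ∈ basicSpan a b c n := by
  intro n
  induction n using Nat.strong_induction_on with
  | _ n IH =>
    intro hodd i j hij
    obtain rfl | hj := Nat.eq_zero_or_pos j
    · rw [I_zero_right]
      exact zero_mem _
    obtain rfl | rfl | hn : n = 1 ∨ n = 3 ∨ 5 ≤ n := by
      obtain ⟨k, rfl⟩ := hodd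
      omega
    · obtain ⟨rfl, rfl⟩ : i = 0 ∧ j = 1 := by omega
      exact I_basicExp_mem_basicSpan 0
    · obtain ⟨rfl, rfl⟩ | ⟨rfl, rfl⟩ | ⟨rfl, rfl⟩ :
          i = 0 ∧ j = 3 ∨ i = 1 ∧ j = 2 ∨ i = 2 ∧ j = 1 := by omega
      · exact I_basicExp_mem_basicSpan 1
      · exact I_basicExp_mem_basicSpan 4
      · exact I_basicExp_mem_basicSpan 2
    · have hodd' : ∀ m, m + 2 = n ∨ m + 4 = n → Odd m := by
        rintro m hm
        obtain ⟨k, rfl⟩ := hodd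
        rcases hm with hm | hm
        · exact ⟨k - 1, by omega⟩
        · exact ⟨k - 2, by omega⟩
      refine I_mem_of_reducedBelow ha hc hdisc hodd hn
        ⟨fun i j h => ?_, fun i j h => ?_⟩ i j hij
      · exact basicSpan_mono (by omega) (IH _ (by omega) (hodd' _ (.inl h)) i j rfl)
      · exact h ▸ level_mul_mem_basicSpan (IH _ (by omega) (hodd' _ (.inr h)) i j rfl)

end ClosedCurve

theorem Polynomial.degree_le_sub_div_four {R : Type*} [Semiring R] {f : R[X]} {N w : ℕ}
    (hf : ∀ d, N < 4 * d + w → f.coeff d = 0) : f.degree ≤ ((N - w) / 4 : ℕ) :=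
  (degree_le_iff_coeff_zero _ _).2 fun d hd => hf d (by
    have : (N - w) / 4 < d := by exact_mod_cast hd
    omega)

theorem Polynomial.degree_lt_sub_div_four {R : Type*} [Semiring R] {f : R[X]} {N w : ℕ}
    (hf : ∀ d, N < 4 * d + (w + 4) → f.coeff d = 0) : f.degree < ((N - w) / 4 : ℕ) :=
  (degree_lt_iff_coeff_zero _ _).2 fun d hd => hf d (by omega)

theorem stmt4_general (a b c : ℝ) (habc : a * c * (b ^ 2 - 4 * a * c) ≠ 0)
    (i j : ℕ) (hodd : Odd (i + j)) :
    ∃ f1 f2 f3 f4 f5 : Polynomial ℝ,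
      f1.degree ≤ (((i + j - 1) / 4 : ℕ) : WithBot ℕ) ∧
      f2.degree ≤ (((i + j - 3) / 4 : ℕ) : WithBot ℕ) ∧
      f3.degree ≤ (((i + j - 3) / 4 : ℕ) : WithBot ℕ) ∧
      f5.degree ≤ (((i + j - 3) / 4 : ℕ) : WithBot ℕ) ∧
      f4.degree < (((i + j - 1) / 4 : ℕ) : WithBot ℕ) ∧
      ∀ (h : ℝ) (x y : ℝ → ℝ) (T : ℝ), 0 < T →
        ContDiff ℝ 1 x → ContDiff ℝ 1 y →
        (∀ t : ℝ, x (t + T) = x t ∧ y (t + T) = y t) →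
        (∀ t : ℝ, Hfun a b c (x t) (y t) = h) →
        lineInt x y T i j =
          f1.eval h * lineInt x y T 0 1 + f2.eval h * lineInt x y T 0 3
          + f3.eval h * lineInt x y T 2 1 + f4.eval h * lineInt x y T 2 3
          + f5.eval h * lineInt x y T 1 2 := by
  obtain ⟨⟨ha, hc⟩, hdisc⟩ : (a ≠ 0 ∧ c ≠ 0) ∧ b ^ 2 - 4 * a * c ≠ 0 := by
    simpa only [ne_eq, mul_eq_zero, not_or] using habc
  obtain ⟨f, hf, hF⟩ := ClosedCurve.I_mem_basicSpan_of_odd ha hc hdisc _ hodd i j rfl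
  refine ⟨f 0, f 1, f 2, f 3, f 4, degree_le_sub_div_four (hf 0),
    degree_le_sub_div_four (hf 1), degree_le_sub_div_four (hf 2),
    degree_le_sub_div_four (hf 4), degree_lt_sub_div_four (hf 3),
    fun h x y T _ hx hy hper hH => ?_⟩
  simpa [Fin.sum_univ_five, ClosedCurve.basicExp, ClosedCurve.I] using
    congrFun hF ⟨h, x, y, T, hx, hy, hper, hH⟩

theorem stmt4 (a b c : ℝ) (habc : a * c * (b ^ 2 - 4 * a * c) ≠ 0)
    (i j : ℕ) (hodd : Odd (i + j)) (hn : 5 ≤ i + j) :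
    ∃ f1 f2 f3 f4 f5 : Polynomial ℝ,
      f1.degree ≤ (((i + j - 1) / 4 : ℕ) : WithBot ℕ) ∧
      f2.degree ≤ (((i + j - 3) / 4 : ℕ) : WithBot ℕ) ∧
      f3.degree ≤ (((i + j - 3) / 4 : ℕ) : WithBot ℕ) ∧
      f5.degree ≤ (((i + j - 3) / 4 : ℕ) : WithBot ℕ) ∧
      f4.degree < (((i + j - 1) / 4 : ℕ) : WithBot ℕ) ∧
      ∀ (h : ℝ) (x y : ℝ → ℝ) (T : ℝ), 0 < T →
        ContDiff ℝ 1 x → ContDiff ℝ 1 y →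
        (∀ t : ℝ, x (t + T) = x t ∧ y (t + T) = y t) →
        (∀ t : ℝ, Hfun a b c (x t) (y t) = h) →
        lineInt x y T i j =
          f1.eval h * lineInt x y T 0 1 + f2.eval h * lineInt x y T 0 3
          + f3.eval h * lineInt x y T 2 1 + f4.eval h * lineInt x y T 2 3
          + f5.eval h * lineInt x y T 1 2 :=
  stmt4_general a b c habc i j hodd
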